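/- arXiv:1903.02251 — 6 statements merged into one kernel-verified Lean document; each statement's English description precedes it below -/
import Mathlib

section
/- Let G be a countable group acting measure-preservingly on a standard probability space (X, μ) such that almost every point has trivial stabilizer. Let Q ⊆ G be a finite symmetric set containing 1. Then for every Borel set B ⊆ X with μ(B) > 0 there exists a Borel set A ⊆ B with μ(A) > 0 such that gA ∩ A = ∅ for every g ∈ Q² \ {1}. -/
/-!
Countably many measurable sets separate the points of a standard Borel space, so the points moved
by a measurable map `f` are covered by countably many measurable sets of the form `t ∩ f⁻¹' tᶜ`,
each of which is moved off itself by `f`. One of them meets `B` in positive measure; repeating this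
inside the previous set for each of the finitely many `g ∈ Q² \ {1}` gives `A`.
-/

open Set Pointwise

/-- `S` is `Q`-spaced: right translates `Qg` for distinct `g ∈ S` are disjoint. -/
def Spaced {G : Type*} [Group G] (Q S : Set G) : Prop :=
  ∀ g ∈ S, ∀ h ∈ S, g ≠ h → Disjoint (Q * ({g} : Set G)) (Q * ({h} : Set G))

/-- `S` is `Q`-syndetic: `⋃_{g ∈ S} Qg = G`. -/
def Syndetic {G : Type*} [Group G] (Q S : Set G) : Prop :=
  ∀ x : G, ∃ g ∈ S, x ∈ Q * ({g} : Set G)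

/-- `S` is a maximal `Q`-spaced set. -/
def MaxSpaced {G : Type*} [Group G] (Q S : Set G) : Prop :=
  Spaced Q S ∧ ∀ T : Set G, Spaced Q T → S ⊆ T → T = S


open MeasureTheory

theorem Set.disjoint_image_of_subset_inter_preimage_compl {α : Type*} {f : α → α} {A t : Set α}
    (hA : A ⊆ t ∩ f ⁻¹' tᶜ) : Disjoint (f '' A) A := by
  rw [disjoint_left]
  rintro _ ⟨x, hx, rfl⟩ hfx
  exact (hA hx).2 (hA hfx).1

section

variable {X : Type*} [MeasurableSpace X] [MeasurableSpace.CountablySeparated X]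

theorem exists_countable_measurableSet_mem_notMem :
    ∃ T : Set (Set X), T.Countable ∧ (∀ t ∈ T, MeasurableSet t) ∧
      ∀ x y : X, x ≠ y → ∃ t ∈ T, x ∈ t ∧ y ∉ t := by
  obtain ⟨S, hSc, hSm, hS⟩ := exists_countable_separating X MeasurableSet univ
  refine ⟨S ∪ compl '' S, hSc.union (hSc.image _), ?_, fun x y hxy => ?_⟩
  · rintro t (ht | ⟨s, hs, rfl⟩)
    exacts [hSm t ht, (hSm s hs).compl]
  · obtain ⟨s, hs, hxy⟩ : ∃ s ∈ S, ¬(x ∈ s ↔ y ∈ s) := by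
      by_contra! h
      exact hxy (hS x trivial y trivial h)
    by_cases hx : x ∈ s
    · exact ⟨s, .inl hs, hx, fun hy => hxy (iff_of_true hx hy)⟩
    · exact ⟨sᶜ, .inr ⟨s, hs, rfl⟩, hx, fun hy => hxy (iff_of_false hx hy)⟩

theorem exists_subset_measure_ne_zero_disjoint_image {μ : Measure X} {f : X → X}
    (hf : Measurable f) (hfree : ∀ᵐ x ∂μ, f x ≠ x) {B : Set X} (hB : MeasurableSet B)
    (hB0 : μ B ≠ 0) : ∃ A ⊆ B, MeasurableSet A ∧ μ A ≠ 0 ∧ Disjoint (f '' A) A := by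
  obtain ⟨T, hTc, hTm, hsep⟩ := exists_countable_measurableSet_mem_notMem (X := X)
  have hcover : B ≤ᵐ[μ] ⋃ t ∈ T, B ∩ (t ∩ f ⁻¹' tᶜ) := by
    filter_upwards [hfree] with x hx hxB
    obtain ⟨t, ht, hxt, hfxt⟩ := hsep x (f x) hx.symm
    exact mem_biUnion ht ⟨hxB, hxt, hfxt⟩
  obtain ⟨t, ht, hpos⟩ : ∃ t ∈ T, μ (B ∩ (t ∩ f ⁻¹' tᶜ)) ≠ 0 := by
    by_contra! h
    exact hB0 (measure_mono_null_ae hcover ((measure_biUnion_null_iff hTc).2 h))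
  exact ⟨_, inter_subset_left, hB.inter ((hTm t ht).inter (hf (hTm t ht).compl)), hpos,
    disjoint_image_of_subset_inter_preimage_compl inter_subset_right⟩

theorem exists_subset_measure_ne_zero_forall_disjoint_image {ι : Type*} {μ : Measure X}
    {s : Set ι} (hs : s.Finite) {f : ι → X → X} (hf : ∀ i ∈ s, Measurable (f i))
    (hfree : ∀ i ∈ s, ∀ᵐ x ∂μ, f i x ≠ x) {B : Set X} (hB : MeasurableSet B) (hB0 : μ B ≠ 0) :
    ∃ A ⊆ B, MeasurableSet A ∧ μ A ≠ 0 ∧ ∀ i ∈ s, Disjoint (f i '' A) A := by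
  induction s, hs using Set.Finite.induction_on generalizing B with
  | empty => exact ⟨B, subset_rfl, hB, hB0, fun _ => False.elim⟩
  | @insert i s _ _ ih =>
    obtain ⟨A₁, hA₁B, hA₁, hA₁0, hdisj₁⟩ := exists_subset_measure_ne_zero_disjoint_image
      (hf i (mem_insert i s)) (hfree i (mem_insert i s)) hB hB0
    obtain ⟨A, hAA₁, hA, hA0, hdisj⟩ :=
      ih (fun j hj => hf j (mem_insert_of_mem i hj))
        (fun j hj => hfree j (mem_insert_of_mem i hj)) hA₁ hA₁0
    refine ⟨A, hAA₁.trans hA₁B, hA, hA0, forall_mem_insert.2 ⟨?_, hdisj⟩⟩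
    exact hdisj₁.mono (image_mono hAA₁) hAA₁

end

theorem stmt6_general {G : Type*} [Group G]
    {X : Type*} [MeasurableSpace X] [StandardBorelSpace X]
    (μ : Measure X)
    (a : G → X → X) (hmeas : ∀ g, Measurable (a g))
    (hfree : ∀ᵐ x ∂μ, ∀ g : G, g ≠ 1 → a g x ≠ x)
    (Q : Set G) (hQfin : Q.Finite)
    (B : Set X) (hB : MeasurableSet B) (hBpos : 0 < μ B) :
    ∃ A : Set X, MeasurableSet A ∧ A ⊆ B ∧ 0 < μ A ∧
      ∀ g ∈ Q * Q, g ≠ 1 → Disjoint (a g '' A) A := by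
  have hfree' : ∀ g ∈ (Q * Q) \ {1}, ∀ᵐ x ∂μ, a g x ≠ x := fun g hg => by
    filter_upwards [hfree] with x hx using hx g hg.2
  obtain ⟨A, hAB, hA, hA0, hdisj⟩ := exists_subset_measure_ne_zero_forall_disjoint_image
    (hQfin.mul hQfin).sdiff (fun g _ => hmeas g) hfree' hB hBpos.ne'
  exact ⟨A, hA, hAB, pos_iff_ne_zero.2 hA0, fun g hg hg1 => hdisj g ⟨hg, hg1⟩⟩

theorem stmt6 {G : Type*} [Group G] [Countable G]
    {X : Type*} [MeasurableSpace X] [StandardBorelSpace X]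
    (μ : Measure X) [IsProbabilityMeasure μ]
    (a : G → X → X) (hmeas : ∀ g, Measurable (a g))
    (hmp : ∀ g, MeasurePreserving (a g) μ μ)
    (hcomp : ∀ g h x, a g (a h x) = a (g * h) x) (hid : ∀ x, a 1 x = x)
    (hfree : ∀ᵐ x ∂μ, ∀ g : G, g ≠ 1 → a g x ≠ x)
    (Q : Set G) (hQfin : Q.Finite) (hQsym : ∀ q ∈ Q, q⁻¹ ∈ Q) (hQone : (1 : G) ∈ Q)
    (B : Set X) (hB : MeasurableSet B) (hBpos : 0 < μ B) :
    ∃ A : Set X, MeasurableSet A ∧ A ⊆ B ∧ 0 < μ A ∧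
      ∀ g ∈ Q * Q, g ≠ 1 → Disjoint (a g '' A) A :=
  stmt6_general μ a hmeas hfree Q hQfin B hB hBpos
end

section
/- Let G be a countable group, A and B finite sets, Y ⊆ A^G a D-irreducible subshift, and φ : Y → B^G a continuous G-equivariant map. Let F ⊆ G be a finite set such that φ(y)(1_G) depends only on y|_F. Then the image Z = φ[Y] is a DF-irreducible subshift of B^G. -/
/-!
By equivariance, `φ y` on a set `E` depends only on `y` on `F * E`. Since
`D * (F * E) = (D * F) * E`, two `D * F`-apart sets `E₀, E₁` pull back to the `D`-apart sets
`F * E₀, F * E₁`, where irreducibility of `Y` glues the two preimages. The image is closed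
because `Y` is compact.
-/

open Set Pointwise

/-- The right shift action of `G` on `A^G`: `(g · s)(h) = s(hg)`. -/
def rshift {G A : Type*} [Group G] (g : G) (s : G → A) : G → A := fun h => s (h * g)

/-- A subshift `Y ⊆ A^G` is `D`-irreducible: any two patterns occurring in `Y`
on finite sets `F₀, F₁` which are `D`-apart can be jointly realized in `Y`. -/
def IrreducibleSubshift {G A : Type*} [Group G] (D : Set G) (Y : Set (G → A)) : Prop :=
  ∀ F₀ F₁ : Set G, F₀.Finite → F₁.Finite → Disjoint (D * F₀) (D * F₁) →
    ∀ y₀ ∈ Y, ∀ y₁ ∈ Y, ∃ y ∈ Y, (∀ f ∈ F₀, y f = y₀ f) ∧ (∀ f ∈ F₁, y f = y₁ f)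

section SlidingBlockCode

variable {G A B : Type*} [Group G]

@[simp]
theorem rshift_apply (g : G) (s : G → A) (h : G) : rshift g s h = s (h * g) := rfl

theorem rshift_rshift_inv (g : G) (s : G → A) : rshift g (rshift g⁻¹ s) = s := by
  funext h
  simp [mul_assoc]

theorem rshift_mem_of_forall_image_eq {Y : Set (G → A)} (hY : ∀ g : G, rshift g '' Y = Y)
    (g : G) {y : G → A} (hy : y ∈ Y) : rshift g y ∈ Y :=
  hY g ▸ mem_image_of_mem _ hy

theorem apply_eq_of_eqOn_mul_right {Y : Set (G → A)} (hY : ∀ g : G, rshift g '' Y = Y)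
    {φ : Y → (G → B)} {F : Set G}
    (hφequiv : ∀ (g : G) (y : Y) (hy : rshift g (y : G → A) ∈ Y),
      φ ⟨rshift g (y : G → A), hy⟩ = rshift g (φ y))
    (hwindow : ∀ y y' : Y, (∀ f ∈ F, (y : G → A) f = (y' : G → A) f) → φ y 1 = φ y' 1)
    (y y' : Y) (g : G) (h : ∀ f ∈ F, (y : G → A) (f * g) = (y' : G → A) (f * g)) :
    φ y g = φ y' g := by
  have hy := rshift_mem_of_forall_image_eq hY g y.2
  have hy' := rshift_mem_of_forall_image_eq hY g y'.2
  simpa [hφequiv g y hy, hφequiv g y' hy'] using hwindow ⟨_, hy⟩ ⟨_, hy'⟩ h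

theorem image_rshift_range_eq {Y : Set (G → A)} (hY : ∀ g : G, rshift g '' Y = Y)
    {φ : Y → (G → B)}
    (hφequiv : ∀ (g : G) (y : Y) (hy : rshift g (y : G → A) ∈ Y),
      φ ⟨rshift g (y : G → A), hy⟩ = rshift g (φ y))
    (g : G) : rshift g '' range φ = range φ := by
  ext z
  constructor
  · rintro ⟨_, ⟨y, rfl⟩, rfl⟩
    exact ⟨⟨rshift g y, rshift_mem_of_forall_image_eq hY g y.2⟩, hφequiv g y _⟩
  · rintro ⟨y, rfl⟩
    refine ⟨rshift g⁻¹ (φ y), ⟨⟨rshift g⁻¹ y, rshift_mem_of_forall_image_eq hY g⁻¹ y.2⟩,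
      hφequiv g⁻¹ y _⟩, rshift_rshift_inv g _⟩

theorem IrreducibleSubshift.range_of_eqOn_mul_right {D : Set G} {Y : Set (G → A)}
    (hIrr : IrreducibleSubshift D Y) {F : Set G} (hF : F.Finite) {φ : Y → (G → B)}
    (hloc : ∀ (y y' : Y) (g : G),
      (∀ f ∈ F, (y : G → A) (f * g) = (y' : G → A) (f * g)) → φ y g = φ y' g) :
    IrreducibleSubshift (D * F) (range φ) := by
  rintro E₀ E₁ hE₀ hE₁ hdisj _ ⟨y₀, rfl⟩ _ ⟨y₁, rfl⟩
  rw [mul_assoc, mul_assoc] at hdisj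
  obtain ⟨y, hy, h₀, h₁⟩ :=
    hIrr (F * E₀) (F * E₁) (hF.mul hE₀) (hF.mul hE₁) hdisj y₀ y₀.2 y₁ y₁.2
  exact ⟨φ ⟨y, hy⟩, mem_range_self _,
    fun g hg => hloc _ y₀ g fun f hf => h₀ _ (mul_mem_mul hf hg),
    fun g hg => hloc _ y₁ g fun f hf => h₁ _ (mul_mem_mul hf hg)⟩

end SlidingBlockCode

theorem stmt10_general {G A B : Type*} [Group G] [Finite A]
    [TopologicalSpace A] [TopologicalSpace B] [DiscreteTopology B]
    (Y : Set (G → A)) (hYcl : IsClosed Y) (hYinv : ∀ g : G, rshift g '' Y = Y)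
    (D : Set G)
    (hIrr : IrreducibleSubshift D Y)
    (F : Set G) (hF : F.Finite)
    (φ : Y → (G → B)) (hφcont : Continuous φ)
    (hφequiv : ∀ (g : G) (y : Y) (hy : rshift g (y : G → A) ∈ Y),
      φ ⟨rshift g (y : G → A), hy⟩ = rshift g (φ y))
    (hwindow : ∀ y y' : Y, (∀ f ∈ F, (y : G → A) f = (y' : G → A) f) → φ y 1 = φ y' 1) :
    IrreducibleSubshift (D * F) (Set.range φ) ∧ IsClosed (Set.range φ) ∧
      ∀ g : G, rshift g '' Set.range φ = Set.range φ := by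
  have : CompactSpace Y := isCompact_iff_compactSpace.mp hYcl.isCompact
  exact ⟨hIrr.range_of_eqOn_mul_right hF (apply_eq_of_eqOn_mul_right hYinv hφequiv hwindow),
    (isCompact_range hφcont).isClosed, image_rshift_range_eq hYinv hφequiv⟩

theorem stmt10 {G A B : Type*} [Group G] [Countable G] [Finite A] [Finite B]
    [TopologicalSpace A] [DiscreteTopology A] [TopologicalSpace B] [DiscreteTopology B]
    (Y : Set (G → A)) (hYcl : IsClosed Y) (hYinv : ∀ g : G, rshift g '' Y = Y)
    (D : Set G) (hD : D.Finite) (hDsym : ∀ d ∈ D, d⁻¹ ∈ D) (hD1 : (1 : G) ∈ D)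
    (hIrr : IrreducibleSubshift D Y)
    (F : Set G) (hF : F.Finite)
    (φ : Y → (G → B)) (hφcont : Continuous φ)
    (hφequiv : ∀ (g : G) (y : Y) (hy : rshift g (y : G → A) ∈ Y),
      φ ⟨rshift g (y : G → A), hy⟩ = rshift g (φ y))
    (hwindow : ∀ y y' : Y, (∀ f ∈ F, (y : G → A) f = (y' : G → A) f) → φ y 1 = φ y' 1) :
    IrreducibleSubshift (D * F) (Set.range φ) ∧ IsClosed (Set.range φ) ∧
      ∀ g : G, rshift g '' Set.range φ = Set.range φ :=
  stmt10_general Y hYcl hYinv D hIrr F hF φ hφcont hφequiv hwindow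
end

section
/- Let G be a countable group and Q ⊆ G finite symmetric containing 1. The subshift Y_Q ⊆ 2^G of indicator functions of maximal Q-spaced sets is Q³-irreducible: for any finite F₀, F₁ ⊆ G with Q³F₀ ∩ Q³F₁ = ∅ and any patterns α_i ∈ S_{F_i}(Y_Q), there exists s ∈ Y_Q with s|_{F_i} = α_i for i = 0, 1. -/
open Set Pointwise

/-- The subshift of indicator functions of maximal `Q`-spaced sets. -/
def YQ {G : Type*} [Group G] (Q : Set G) : Set (G → Bool) :=
  {s | MaxSpaced Q {g | s g = true}}


/-!
A maximal `Q`-spaced set `S₀` is pinned down on `F` by its points in `Q⁻¹QF`: a point `g ∈ F`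
outside `S₀` is blocked by some `h ∈ S₀` with `Qg ∩ Qh ≠ ∅`, i.e. `h ∈ Q⁻¹Qg`. So to realize two
patterns, take the points of `S₀` in `Q⁻¹QF₀` together with those of `S₁` in `Q⁻¹QF₁`; when
`QQ⁻¹QF₀` and `QQ⁻¹QF₁` are disjoint this union is still spaced, and any maximal spaced extension
of it (Zorn) carries both patterns.
-/

namespace Spaced

variable {G : Type*} [Group G] {Q S T : Set G}

-- `Spaced Q S` is definitionally `S.PairwiseDisjoint fun g => Q * {g}`.

theorem exists_maxSpaced_superset (hS : Spaced Q S) : ∃ M, S ⊆ M ∧ MaxSpaced Q M := by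
  obtain ⟨M, hSM, hM⟩ := zorn_subset_nonempty {T : Set G | Spaced Q T}
    (fun c hc hchain _ => ⟨⋃₀ c, (pairwiseDisjoint_sUnion hchain.directedOn).2 hc,
      fun _ => subset_sUnion_of_mem⟩) S hS
  exact ⟨M, hSM, hM.prop, fun T hT hMT => (hM.eq_of_subset hT hMT).symm⟩

theorem subset (hS : Spaced Q S) (hTS : T ⊆ S) : Spaced Q T :=
  PairwiseDisjoint.subset hS hTS

theorem union (hS : Spaced Q S) (hT : Spaced Q T)
    (h : ∀ g ∈ S, ∀ k ∈ T, Disjoint (Q * ({g} : Set G)) (Q * ({k} : Set G))) :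
    Spaced Q (S ∪ T) :=
  PairwiseDisjoint.union hS hT fun g hg k hk _ => h g hg k hk

end Spaced

section

variable {G : Type*} [Group G] {Q : Set G}

theorem mem_inv_mul_mul_singleton_of_not_disjoint {g h : G}
    (hgh : ¬Disjoint (Q * ({g} : Set G)) (Q * ({h} : Set G))) : h ∈ Q⁻¹ * Q * {g} := by
  rw [mul_singleton, mul_singleton, not_disjoint_iff] at hgh
  obtain ⟨_, ⟨q₁, hq₁, rfl⟩, q₂, hq₂, hq⟩ := hgh
  refine ⟨q₂⁻¹ * q₁, mul_mem_mul (inv_mem_inv.mpr hq₂) hq₁, g, rfl, ?_⟩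
  simp only at hq ⊢
  rw [mul_assoc, ← hq, inv_mul_cancel_left]

theorem subset_inv_mul_mul (hQ : Q.Nonempty) (F : Set G) : F ⊆ Q⁻¹ * Q * F :=
  subset_mul_right F (one_mem_inv_mul_iff.mpr (not_disjoint_iff_nonempty_inter.mpr (by rwa [inter_self])))

theorem MaxSpaced.exists_not_disjoint {S : Set G} (hS : MaxSpaced Q S) {g : G} (hg : g ∉ S) :
    ∃ h ∈ S, ¬Disjoint (Q * ({g} : Set G)) (Q * ({h} : Set G)) := by
  by_contra! hdisj
  have : Spaced Q (insert g S) := PairwiseDisjoint.insert hS.1 fun h hh _ => hdisj h hh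
  exact hg (hS.2 _ this (subset_insert g S) ▸ mem_insert g S)

theorem MaxSpaced.mem_iff_of_inter_subset (hQ : Q.Nonempty) {S₀ S F : Set G}
    (hS₀ : MaxSpaced Q S₀) (hS : Spaced Q S) (hsub : S₀ ∩ (Q⁻¹ * Q * F) ⊆ S) {g : G}
    (hg : g ∈ F) : g ∈ S ↔ g ∈ S₀ := by
  refine ⟨fun hgS => ?_, fun hgS₀ => hsub ⟨hgS₀, subset_inv_mul_mul hQ F hg⟩⟩
  by_contra hgS₀
  obtain ⟨h, hhS₀, hgh⟩ := hS₀.exists_not_disjoint hgS₀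
  have hhQF : h ∈ Q⁻¹ * Q * F :=
    mul_subset_mul_left (singleton_subset_iff.mpr hg)
      (mem_inv_mul_mul_singleton_of_not_disjoint hgh)
  exact hgh (hS g hgS h (hsub ⟨hhS₀, hhQF⟩) (by rintro rfl; exact hgS₀ hhS₀))

theorem irreducibleSubshift_YQ (hQ : Q.Nonempty) :
    IrreducibleSubshift (Q * Q⁻¹ * Q) (YQ Q) := by
  classical
  intro F₀ F₁ _ _ hdisj y₀ hy₀ y₁ hy₁
  have hQQF (F : Set G) : Q * (Q⁻¹ * Q * F) = Q * Q⁻¹ * Q * F := by simp only [mul_assoc]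
  have hA : Spaced Q ({g | y₀ g} ∩ (Q⁻¹ * Q * F₀) ∪ {g | y₁ g} ∩ (Q⁻¹ * Q * F₁)) :=
    Spaced.union (hy₀.1.subset inter_subset_left) (hy₁.1.subset inter_subset_left)
      fun g hg k hk => hdisj.mono
        (hQQF F₀ ▸ mul_subset_mul_left (singleton_subset_iff.mpr hg.2))
        (hQQF F₁ ▸ mul_subset_mul_left (singleton_subset_iff.mpr hk.2))
  obtain ⟨S, hAS, hS⟩ := hA.exists_maxSpaced_superset
  have hagree {y : G → Bool} (hy : y ∈ YQ Q) {F : Set G}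
      (hsub : {g | y g} ∩ (Q⁻¹ * Q * F) ⊆ S) (f : G) (hf : f ∈ F) : decide (f ∈ S) = y f :=
    Bool.eq_iff_iff.mpr (by simpa using MaxSpaced.mem_iff_of_inter_subset hQ hy hS.1 hsub hf)
  refine ⟨fun g => decide (g ∈ S), ?_, hagree hy₀ fun _ h => hAS (Or.inl h),
    hagree hy₁ fun _ h => hAS (Or.inr h)⟩
  simpa [YQ] using hS

end

theorem stmt12_general {G : Type*} [Group G] (Q : Set G)
    (hQsym : ∀ q ∈ Q, q⁻¹ ∈ Q) (hQone : (1 : G) ∈ Q) :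
    IrreducibleSubshift (Q * Q * Q) (YQ Q) := by
  have hQinv : Q⁻¹ = Q := inv_eq_self_iff_inv_subset.mpr fun q hq => by simpa using hQsym _ hq
  simpa [hQinv] using irreducibleSubshift_YQ ⟨1, hQone⟩

theorem stmt12 {G : Type*} [Group G] [Countable G] (Q : Set G)
    (hQfin : Q.Finite) (hQsym : ∀ q ∈ Q, q⁻¹ ∈ Q) (hQone : (1 : G) ∈ Q) :
    IrreducibleSubshift (Q * Q * Q) (YQ Q) :=
  stmt12_general Q hQsym hQone
end

section
/- Let G be a countable group acting by homeomorphisms on a Cantor set Y, and let g ∈ G. Let Y_g = {y ∈ Y : g·y = y} be the fixed-point set of g, and suppose Y \ Y_g is a countable union of clopen sets U_n with g·U_n ∩ U_n = ∅. Then Y \ Y_g can be partitioned into three sets A, B, C, each open and relatively clopen in Y \ Y_g, such that g·A ∩ A = ∅, g·B ∩ B = ∅, and g·C ∩ C = ∅. -/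
/-!
Colour the points of `⋃ n, U n` in stages: at stage `n + 1` every still uncoloured point `x` of
`U n` gets the least of three colours not already carried by `f x` or `f⁻¹ x`. Since
`f '' U n` misses `U n`, two neighbours `x`, `f x` never get coloured at the same stage, so
neighbours always end up with different colours. Each stage is a locally constant function of
`x` (the `U n` are clopen and `f` is a homeomorphism), so the colour classes are open, and
being complementary to each other inside `⋃ n, U n` they are relatively closed there.
-/

open Set

theorem IsLocallyConstant.ite {X Y : Type*} [TopologicalSpace X] {p : X → Prop}
    [DecidablePred p] (hp : IsClopen {x | p x}) {f g : X → Y} (hf : IsLocallyConstant f)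
    (hg : IsLocallyConstant g) : IsLocallyConstant fun x => if p x then f x else g x := by
  rw [IsLocallyConstant.iff_eventually_eq]
  intro x
  by_cases hx : p x
  · filter_upwards [hp.isOpen.mem_nhds hx, hf.eventually_eq x] with y hy hfy
    simp [hx, hy, hfy]
  · filter_upwards [hp.isClosed.isOpen_compl.mem_nhds hx, hg.eventually_eq x] with y hy hgy
    simp_all

namespace ThreeColoring

def freshColor (a b : Option (Fin 3)) : Fin 3 :=
  if a ≠ some 0 ∧ b ≠ some 0 then 0 else if a ≠ some 1 ∧ b ≠ some 1 then 1 else 2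

theorem some_freshColor_ne_left (a b : Option (Fin 3)) : some (freshColor a b) ≠ a := by
  revert a b; decide

theorem some_freshColor_ne_right (a b : Option (Fin 3)) : some (freshColor a b) ≠ b := by
  revert a b; decide

variable {Y : Type*} [TopologicalSpace Y] (f : Y ≃ₜ Y) (U : ℕ → Set Y)

open Classical in
/-- The colouring after `n` stages; `none` means not yet coloured. -/
noncomputable def partialColoring : ℕ → Y → Option (Fin 3)
  | 0 => fun _ => none
  | n + 1 => fun x =>
    if partialColoring n x = none ∧ x ∈ U n then
      some (freshColor (partialColoring n (f x)) (partialColoring n (f.symm x)))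
    else partialColoring n x

variable {f U}

theorem partialColoring_succ_of_new {n : ℕ} {x : Y} (hx : partialColoring f U n x = none)
    (hxU : x ∈ U n) : partialColoring f U (n + 1) x =
      some (freshColor (partialColoring f U n (f x)) (partialColoring f U n (f.symm x))) := by
  simp only [partialColoring, hx, hxU, and_self, if_true]

theorem partialColoring_succ_of_not_new {n : ℕ} {x : Y}
    (hx : ¬(partialColoring f U n x = none ∧ x ∈ U n)) :
    partialColoring f U (n + 1) x = partialColoring f U n x := by
  simp only [partialColoring, if_neg hx]

theorem partialColoring_succ_of_eq_some {n : ℕ} {x : Y} {i : Fin 3}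
    (hx : partialColoring f U n x = some i) : partialColoring f U (n + 1) x = some i := by
  rw [partialColoring_succ_of_not_new (by simp [hx]), hx]

theorem partialColoring_eq_some_of_le {n m : ℕ} {x : Y} {i : Fin 3}
    (hx : partialColoring f U n x = some i) (hnm : n ≤ m) : partialColoring f U m x = some i := by
  induction m, hnm using Nat.le_induction with
  | base => exact hx
  | succ m _ ih => exact partialColoring_succ_of_eq_some ih

theorem partialColoring_succ_ne_none {n : ℕ} {x : Y} (hx : x ∈ U n) :
    partialColoring f U (n + 1) x ≠ none := by
  by_cases hnew : partialColoring f U n x = none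
  · simp [partialColoring_succ_of_new hnew hx]
  · rwa [partialColoring_succ_of_not_new (by tauto)]

theorem exists_mem_of_partialColoring_eq_some {n : ℕ} {x : Y} {i : Fin 3}
    (hx : partialColoring f U n x = some i) : ∃ m, x ∈ U m := by
  induction n with
  | zero => simp [partialColoring] at hx
  | succ n ih =>
    by_cases hnew : partialColoring f U n x = none ∧ x ∈ U n
    · exact ⟨n, hnew.2⟩
    · exact ih (partialColoring_succ_of_not_new hnew ▸ hx)

theorem isLocallyConstant_partialColoring (hU : ∀ n, IsClopen (U n)) (n : ℕ) :
    IsLocallyConstant (partialColoring f U n) := by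
  induction n with
  | zero => exact IsLocallyConstant.const none
  | succ n ih =>
    classical
    have hnew : IsClopen {x | partialColoring f U n x = none ∧ x ∈ U n} :=
      (ih.isClopen_fiber none).inter (hU n)
    have hfresh : IsLocallyConstant fun x =>
        some (freshColor (partialColoring f U n (f x)) (partialColoring f U n (f.symm x))) :=
      ((ih.comp_continuous f.continuous).comp₂ (ih.comp_continuous f.symm.continuous) _).comp some
    exact IsLocallyConstant.ite hnew hfresh ih

theorem ne_of_partialColoring_eq_some (hmove : ∀ n, Disjoint (f '' U n) (U n)) {n : ℕ} {x : Y}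
    {i j : Fin 3} (hx : partialColoring f U n x = some i)
    (hfx : partialColoring f U n (f x) = some j) : i ≠ j := by
  induction n with
  | zero => simp [partialColoring] at hx
  | succ n ih =>
    rintro rfl
    by_cases hxnew : partialColoring f U n x = none ∧ x ∈ U n <;>
      by_cases hfxnew : partialColoring f U n (f x) = none ∧ f x ∈ U n
    · exact disjoint_left.mp (hmove n) ⟨x, hxnew.2, rfl⟩ hfxnew.2
    · rw [partialColoring_succ_of_new hxnew.1 hxnew.2] at hx
      rw [partialColoring_succ_of_not_new hfxnew] at hfx
      exact some_freshColor_ne_left _ _ (hx.trans hfx.symm)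
    · rw [partialColoring_succ_of_not_new hxnew] at hx
      rw [partialColoring_succ_of_new hfxnew.1 hfxnew.2, f.symm_apply_apply] at hfx
      exact some_freshColor_ne_right _ _ (hfx.trans hx.symm)
    · rw [partialColoring_succ_of_not_new hxnew] at hx
      rw [partialColoring_succ_of_not_new hfxnew] at hfx
      exact ih hx hfx rfl

variable (f U) in
def colorClass (i : Fin 3) : Set Y :=
  ⋃ n, partialColoring f U n ⁻¹' {some i}

theorem mem_colorClass {x : Y} {i : Fin 3} :
    x ∈ colorClass f U i ↔ ∃ n, partialColoring f U n x = some i := by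
  simp [colorClass]

theorem isOpen_colorClass (hU : ∀ n, IsClopen (U n)) (i : Fin 3) :
    IsOpen (colorClass f U i) :=
  isOpen_iUnion fun n => (isLocallyConstant_partialColoring hU n).isOpen_fiber (some i)

theorem exists_common_stage_of_mem_colorClass {x y : Y} {i j : Fin 3}
    (hx : x ∈ colorClass f U i) (hy : y ∈ colorClass f U j) :
    ∃ n, partialColoring f U n x = some i ∧ partialColoring f U n y = some j := by
  obtain ⟨n, hn⟩ := mem_colorClass.mp hx
  obtain ⟨m, hm⟩ := mem_colorClass.mp hy
  exact ⟨max n m, partialColoring_eq_some_of_le hn (le_max_left n m),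
    partialColoring_eq_some_of_le hm (le_max_right n m)⟩

theorem disjoint_colorClass {i j : Fin 3} (hij : i ≠ j) :
    Disjoint (colorClass f U i) (colorClass f U j) := by
  refine disjoint_left.mpr fun x hi hj => hij ?_
  obtain ⟨n, hn, hn'⟩ := exists_common_stage_of_mem_colorClass hi hj
  exact Option.some_injective _ (hn.symm.trans hn')

theorem disjoint_image_colorClass (hmove : ∀ n, Disjoint (f '' U n) (U n)) (i : Fin 3) :
    Disjoint (f '' colorClass f U i) (colorClass f U i) := by
  refine disjoint_left.mpr ?_
  rintro - ⟨x, hx, rfl⟩ hfx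
  obtain ⟨n, hn, hn'⟩ := exists_common_stage_of_mem_colorClass hx hfx
  exact ne_of_partialColoring_eq_some hmove hn hn' rfl

theorem exists_mem_colorClass_iff {x : Y} :
    (∃ i, x ∈ colorClass f U i) ↔ ∃ n, x ∈ U n := by
  constructor
  · rintro ⟨i, hi⟩
    obtain ⟨n, hn⟩ := mem_colorClass.mp hi
    exact exists_mem_of_partialColoring_eq_some hn
  · rintro ⟨n, hn⟩
    obtain ⟨i, hi⟩ := Option.ne_none_iff_exists'.mp (partialColoring_succ_ne_none hn)
    exact ⟨i, mem_colorClass.mpr ⟨n + 1, hi⟩⟩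

theorem closure_colorClass_inter_subset (hU : ∀ n, IsClopen (U n)) (i : Fin 3) :
    closure (colorClass f U i) ∩ ⋃ n, U n ⊆ colorClass f U i := by
  rintro x ⟨hcl, hxU⟩
  obtain ⟨j, hj⟩ := exists_mem_colorClass_iff.mpr (mem_iUnion.mp hxU)
  by_contra hi
  have hij : i ≠ j := by rintro rfl; exact hi hj
  exact disjoint_left.mp ((disjoint_colorClass hij).closure_left (isOpen_colorClass hU j)) hcl hj

end ThreeColoring

open ThreeColoring in
theorem stmt14_general {Y : Type*} [TopologicalSpace Y]
    (f : Y ≃ₜ Y)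
    (U : ℕ → Set Y) (hUclopen : ∀ n, IsClopen (U n))
    (hUmove : ∀ n, Disjoint (f '' U n) (U n))
    (hUcover : (⋃ n, U n) = {y : Y | f y ≠ y}) :
    ∃ A B C : Set Y,
      A ∪ B ∪ C = {y : Y | f y ≠ y} ∧
      Disjoint A B ∧ Disjoint A C ∧ Disjoint B C ∧
      IsOpen A ∧ IsOpen B ∧ IsOpen C ∧
      -- each piece is relatively closed (hence clopen) in `Y \ Y_g = {y | f y ≠ y}`
      closure A ∩ {y : Y | f y ≠ y} ⊆ A ∧
      closure B ∩ {y : Y | f y ≠ y} ⊆ B ∧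
      closure C ∩ {y : Y | f y ≠ y} ⊆ C ∧
      Disjoint (f '' A) A ∧ Disjoint (f '' B) B ∧ Disjoint (f '' C) C := by
  rw [← hUcover]
  refine ⟨colorClass f U 0, colorClass f U 1, colorClass f U 2, ?_,
    disjoint_colorClass (by decide), disjoint_colorClass (by decide),
    disjoint_colorClass (by decide), isOpen_colorClass hUclopen 0, isOpen_colorClass hUclopen 1,
    isOpen_colorClass hUclopen 2, closure_colorClass_inter_subset hUclopen 0,
    closure_colorClass_inter_subset hUclopen 1, closure_colorClass_inter_subset hUclopen 2,
    disjoint_image_colorClass hUmove 0, disjoint_image_colorClass hUmove 1,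
    disjoint_image_colorClass hUmove 2⟩
  ext x
  rw [mem_iUnion, ← exists_mem_colorClass_iff (f := f)]
  simp [Fin.exists_fin_succ, or_assoc]

/-- Partitioning the non-fixed-point set of a homeomorphism of a Cantor set into three
relatively clopen pieces, each moved off itself. -/
theorem stmt14 {Y : Type*} [TopologicalSpace Y] [CompactSpace Y]
    [TopologicalSpace.MetrizableSpace Y] [TotallyDisconnectedSpace Y] [PerfectSpace Y]
    (f : Y ≃ₜ Y)
    (U : ℕ → Set Y) (hUclopen : ∀ n, IsClopen (U n))
    (hUmove : ∀ n, Disjoint (f '' U n) (U n))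
    (hUcover : (⋃ n, U n) = {y : Y | f y ≠ y}) :
    ∃ A B C : Set Y,
      A ∪ B ∪ C = {y : Y | f y ≠ y} ∧
      Disjoint A B ∧ Disjoint A C ∧ Disjoint B C ∧
      IsOpen A ∧ IsOpen B ∧ IsOpen C ∧
      -- each piece is relatively closed (hence clopen) in `Y \ Y_g = {y | f y ≠ y}`
      closure A ∩ {y : Y | f y ≠ y} ⊆ A ∧
      closure B ∩ {y : Y | f y ≠ y} ⊆ B ∧
      closure C ∩ {y : Y | f y ≠ y} ⊆ C ∧
      Disjoint (f '' A) A ∧ Disjoint (f '' B) B ∧ Disjoint (f '' C) C :=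
  stmt14_general f U hUclopen hUmove hUcover
end

section
/- Let Y be a compact metrizable space, B a countable Boolean subalgebra of the regular open algebra Reg(Y) containing a basis for the topology of Y, and let π : St(B) → Y be the map sending an ultrafilter p to the unique y ∈ Y such that every A ∈ B with y ∈ A belongs to p. Then the set {y ∈ Y : |π⁻¹({y})| = 1} equals ⋂_{A ∈ B} (A ∪ (Y \ cl(A))), and in particular is a dense G_δ subset of Y. -/
/-- An ultrafilter on a Boolean subalgebra `B` of the regular open algebra of `Y`
(where the meet is intersection and the complement of `A` is `(closure A)ᶜ`). -/
def IsUltrafilterOn {Y : Type*} [TopologicalSpace Y] (B p : Set (Set Y)) : Prop :=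
  p ⊆ B ∧ Set.univ ∈ p ∧ ∅ ∉ p ∧
  (∀ a ∈ p, ∀ b ∈ B, a ⊆ b → b ∈ p) ∧
  (∀ a ∈ p, ∀ b ∈ p, a ∩ b ∈ p) ∧
  (∀ A ∈ B, A ∈ p ∨ (closure A)ᶜ ∈ p)

/-- The set of `y ∈ Y` having a unique `π`-preimage in the Stone space `St(B)`:
`π(p) = y` iff every `A ∈ B` containing `y` lies in `p`. -/
def UniquePreimageSet {Y : Type*} [TopologicalSpace Y] (B : Set (Set Y)) : Set Y :=
  {y : Y | ∃! p : Set (Set Y), IsUltrafilterOn B p ∧ ∀ A ∈ B, y ∈ A → A ∈ p}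

open Set Filter Topology

/-!
A point `y` lying in `A ∪ (closure A)ᶜ` for every `A ∈ B` decides every element of `B`, so the
only ultrafilter over it is `{A ∈ B | y ∈ A}`. If instead `y ∈ closure A \ A` for some `A ∈ B`,
then `y` is also in the closure of `(closure A)ᶜ` (as `A` is regular open), and each of `A` and
`(closure A)ᶜ` extends to an ultrafilter over `y`: trace on `B` an ultrafilter of `Y` finer than
`𝓝[A] y` (resp. `𝓝[(closure A)ᶜ] y`) and than all dense open sets, in particular than every
`D ∪ (closure D)ᶜ`. The set of such points is a countable intersection of dense open sets, hence a
dense `G_δ` in the Baire space `Y`.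
-/

section

variable {Y : Type*} [TopologicalSpace Y]

theorem dense_union_compl_closure (A : Set Y) : Dense (A ∪ (closure A)ᶜ) := by
  intro x
  by_cases hx : x ∈ closure A
  · exact closure_mono subset_union_left hx
  · exact subset_closure (Or.inr hx)

theorem neBot_nhdsWithin_inf_generate_dense_open {E : Set Y} (hE : IsOpen E) {y : Y}
    (hy : y ∈ closure E) : (𝓝[E] y ⊓ generate {s | IsOpen s ∧ Dense s}).NeBot := by
  refine inf_neBot_iff.2 fun s hs s' hs' => ?_
  obtain ⟨u, hu, hyu, hus⟩ := mem_nhdsWithin.1 hs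
  obtain ⟨t, hts, ht, hts'⟩ := mem_generate_iff.1 hs'
  have hdense : Dense (⋂₀ t) :=
    ht.dense_sInter (fun v hv => (hts hv).1) (fun v hv => (hts hv).2)
  obtain ⟨x, hxu, hxt⟩ :=
    hdense.inter_open_nonempty _ (hu.inter hE) (mem_closure_iff.1 hy u hu hyu)
  exact ⟨x, hus hxu, hts' hxt⟩

variable {B p : Set (Set Y)}

theorem IsUltrafilterOn.compl_closure_notMem (hp : IsUltrafilterOn B p) {A : Set Y}
    (hA : A ∈ p) : (closure A)ᶜ ∉ p := fun hA' => by
  have := hp.2.2.2.2.1 _ hA _ hA'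
  rw [(subset_closure (s := A)).disjoint_compl_right.inter_eq] at this
  exact hp.2.2.1 this

section Trace

variable (huniv : univ ∈ B) (hinter : ∀ A ∈ B, ∀ A' ∈ B, A ∩ A' ∈ B)
  (hcompl : ∀ A ∈ B, (closure A)ᶜ ∈ B)
include huniv hinter hcompl

theorem isUltrafilterOn_trace (U : Ultrafilter Y) (hU : ∀ D ∈ B, D ∪ (closure D)ᶜ ∈ U) :
    IsUltrafilterOn B {C ∈ B | C ∈ U} := by
  refine ⟨fun C hC => hC.1, ⟨huniv, univ_mem⟩, fun h => U.empty_notMem h.2,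
    fun a ha b hb hab => ⟨hb, mem_of_superset ha.2 hab⟩,
    fun a ha b hb => ⟨hinter _ ha.1 _ hb.1, inter_mem ha.2 hb.2⟩, fun C hC => ?_⟩
  by_cases hCU : C ∈ U
  · exact Or.inl ⟨hC, hCU⟩
  · refine Or.inr ⟨hcompl _ hC, mem_of_superset (inter_mem (U.compl_mem_iff_notMem.2 hCU)
      (hU C hC)) ?_⟩
    rintro x ⟨hxC, hxC' | hx⟩
    exacts [absurd hxC' hxC, hx]

theorem exists_isUltrafilterOn_mem (hopen : ∀ A ∈ B, IsOpen A) {y : Y} {E : Set Y}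
    (hE : E ∈ B) (hyE : y ∈ closure E) :
    ∃ p, (IsUltrafilterOn B p ∧ ∀ A ∈ B, y ∈ A → A ∈ p) ∧ E ∈ p := by
  have := neBot_nhdsWithin_inf_generate_dense_open (hopen E hE) hyE
  set U := Ultrafilter.of (𝓝[E] y ⊓ generate {s | IsOpen s ∧ Dense s})
  have hnhds : (U : Filter Y) ≤ 𝓝[E] y := (Ultrafilter.of_le _).trans inf_le_left
  have hdense : (U : Filter Y) ≤ generate {s | IsOpen s ∧ Dense s} :=
    (Ultrafilter.of_le _).trans inf_le_right
  refine ⟨{C ∈ B | C ∈ U}, ⟨isUltrafilterOn_trace huniv hinter hcompl U fun D hD => ?_,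
    fun A hA hyA => ⟨hA, hnhds (mem_nhdsWithin_of_mem_nhds ((hopen A hA).mem_nhds hyA))⟩⟩,
    hE, hnhds self_mem_nhdsWithin⟩
  exact hdense (mem_generate_of_mem ⟨(hopen D hD).union isClosed_closure.isOpen_compl,
    dense_union_compl_closure D⟩)

theorem uniquePreimageSet_subset_iInter (hreg : ∀ A ∈ B, A = interior (closure A)) :
    UniquePreimageSet B ⊆ ⋂ A ∈ B, A ∪ (closure A)ᶜ := by
  have hopen : ∀ A ∈ B, IsOpen A := fun A hA => hreg A hA ▸ isOpen_interior
  rintro y ⟨p, -, hpu⟩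
  refine mem_iInter₂.2 fun A hA => ?_
  by_contra hyA
  simp only [mem_union, mem_compl_iff, not_or, not_not] at hyA
  have hy' : y ∈ closure (closure A)ᶜ := by
    rw [closure_compl, ← hreg A hA]
    exact hyA.1
  obtain ⟨p₁, hp₁, hAp₁⟩ := exists_isUltrafilterOn_mem huniv hinter hcompl hopen hA hyA.2
  obtain ⟨p₂, hp₂, hAp₂⟩ :=
    exists_isUltrafilterOn_mem huniv hinter hcompl hopen (hcompl A hA) hy'
  have hp : p₁ = p₂ := (hpu p₁ hp₁).trans (hpu p₂ hp₂).symm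
  exact hp₂.1.compl_closure_notMem (hp ▸ hAp₁) hAp₂

theorem iInter_subset_uniquePreimageSet :
    ⋂ A ∈ B, A ∪ (closure A)ᶜ ⊆ UniquePreimageSet B := by
  intro y hy
  rw [mem_iInter₂] at hy
  refine ⟨{C ∈ B | C ∈ pure y}, ⟨isUltrafilterOn_trace huniv hinter hcompl (pure y) hy,
    fun A hA hyA => ⟨hA, hyA⟩⟩, ?_⟩
  rintro p ⟨hp, hpy⟩
  ext C
  refine ⟨fun hC => ⟨hp.1 hC, ?_⟩, fun hC => hpy C hC.1 hC.2⟩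
  refine (hy C (hp.1 hC)).resolve_right fun hyC => ?_
  exact hp.compl_closure_notMem hC (hpy _ (hcompl C (hp.1 hC)) hyC)

end Trace

end

theorem stmt18_general {Y : Type*} [TopologicalSpace Y] [CompactSpace Y]
    [TopologicalSpace.MetrizableSpace Y]
    (B : Set (Set Y)) (hcount : B.Countable)
    (hreg : ∀ A ∈ B, A = interior (closure A))
    (huniv : Set.univ ∈ B)
    (hinter : ∀ A ∈ B, ∀ A' ∈ B, A ∩ A' ∈ B)
    (hcompl : ∀ A ∈ B, (closure A)ᶜ ∈ B) :
    UniquePreimageSet B = (⋂ A ∈ B, A ∪ (closure A)ᶜ) ∧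
    IsGδ (⋂ A ∈ B, A ∪ (closure A)ᶜ) ∧
    Dense (⋂ A ∈ B, A ∪ (closure A)ᶜ) := by
  have hopen : ∀ A ∈ B, IsOpen (A ∪ (closure A)ᶜ) := fun A hA =>
    (hreg A hA ▸ isOpen_interior : IsOpen A).union isClosed_closure.isOpen_compl
  refine ⟨(uniquePreimageSet_subset_iInter huniv hinter hcompl hreg).antisymm
      (iInter_subset_uniquePreimageSet huniv hinter hcompl), ?_, ?_⟩
  · exact IsGδ.biInter_of_isOpen hcount hopen
  · exact dense_biInter_of_isOpen hopen hcount fun A _ => dense_union_compl_closure A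

theorem stmt18 {Y : Type*} [TopologicalSpace Y] [CompactSpace Y]
    [TopologicalSpace.MetrizableSpace Y]
    (B : Set (Set Y)) (hcount : B.Countable)
    (hreg : ∀ A ∈ B, A = interior (closure A))
    (huniv : Set.univ ∈ B) (hempty : ∅ ∈ B)
    (hinter : ∀ A ∈ B, ∀ A' ∈ B, A ∩ A' ∈ B)
    (hcompl : ∀ A ∈ B, (closure A)ᶜ ∈ B)
    (hbasis : ∀ y : Y, ∀ U : Set Y, IsOpen U → y ∈ U → ∃ A ∈ B, y ∈ A ∧ A ⊆ U) :
    UniquePreimageSet B = (⋂ A ∈ B, A ∪ (closure A)ᶜ) ∧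
    IsGδ (⋂ A ∈ B, A ∪ (closure A)ᶜ) ∧
    Dense (⋂ A ∈ B, A ∪ (closure A)ᶜ) :=
  stmt18_general B hcount hreg huniv hinter hcompl
end

section
/- Let Y be a compact metrizable space, M a family of Borel probability measures on Y, and B a countable Boolean subalgebra of Reg(Y) consisting of strongly regular open sets (i.e., μ(cl(A) \ A) = 0 for every A ∈ B and μ ∈ M) and containing a basis for the topology. Let π : St(B) → Y be the canonical map from the Stone space. Then for every μ ∈ M, μ({y ∈ Y : |π⁻¹({y})| = 1}) = 1. -/
/-!
A point `y` on none of the boundaries `closure A \ A`, `A ∈ B`, lies either in `A` or in its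
complement `(closure A)ᶜ` for every `A ∈ B`. So `{A ∈ B | y ∈ A}` is an ultrafilter over `y`, and any
ultrafilter over `y` contains it and hence equals it. The points without a unique preimage therefore
lie in the countable union of the boundaries, each of which is `μ`-null.
-/

open MeasureTheory

section PrincipalUltrafilter

variable {Y : Type*} [TopologicalSpace Y] {B : Set (Set Y)} {y : Y}

lemma isUltrafilterOn_setOf_mem (huniv : Set.univ ∈ B)
    (hinter : ∀ A ∈ B, ∀ A' ∈ B, A ∩ A' ∈ B) (hcompl : ∀ A ∈ B, (closure A)ᶜ ∈ B)
    (hy : ∀ A ∈ B, y ∈ A ∨ y ∉ closure A) :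
    IsUltrafilterOn B {A | A ∈ B ∧ y ∈ A} := by
  refine ⟨fun A hA => hA.1, ⟨huniv, trivial⟩, fun h => h.2, ?_, ?_, ?_⟩
  · exact fun a ha b hb hab => ⟨hb, hab ha.2⟩
  · exact fun a ha b hb => ⟨hinter a ha.1 b hb.1, ha.2, hb.2⟩
  · intro A hA
    exact (hy A hA).imp (fun h => ⟨hA, h⟩) (fun h => ⟨hcompl A hA, h⟩)

lemma IsUltrafilterOn.eq_setOf_mem {p : Set (Set Y)} (hp : IsUltrafilterOn B p)
    (hcompl : ∀ A ∈ B, (closure A)ᶜ ∈ B) (hy : ∀ A ∈ B, y ∈ A ∨ y ∉ closure A)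
    (hyp : ∀ A ∈ B, y ∈ A → A ∈ p) :
    p = {A | A ∈ B ∧ y ∈ A} := by
  obtain ⟨hpB, -, hp_empty, -, hp_inter, -⟩ := hp
  ext A
  refine ⟨fun hA => ⟨hpB hA, ?_⟩, fun hA => hyp A hA.1 hA.2⟩
  by_contra hyA
  have hAc : (closure A)ᶜ ∈ p :=
    hyp _ (hcompl A (hpB hA)) ((hy A (hpB hA)).resolve_left hyA)
  have hdisj : A ∩ (closure A)ᶜ = ∅ :=
    Set.eq_empty_of_forall_notMem fun x hx => hx.2 (subset_closure hx.1)
  exact hp_empty (hdisj ▸ hp_inter A hA _ hAc)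

lemma compl_uniquePreimageSet_subset (huniv : Set.univ ∈ B)
    (hinter : ∀ A ∈ B, ∀ A' ∈ B, A ∩ A' ∈ B) (hcompl : ∀ A ∈ B, (closure A)ᶜ ∈ B) :
    (UniquePreimageSet B)ᶜ ⊆ ⋃ A ∈ B, closure A \ A := by
  intro y hy
  by_contra hbd
  simp only [Set.mem_iUnion, Set.mem_sdiff, not_exists, not_and, not_not] at hbd
  have hy' : ∀ A ∈ B, y ∈ A ∨ y ∉ closure A := fun A hA =>
    or_iff_not_imp_right.2 (hbd A hA ∘ not_not.1)
  exact hy ⟨_, ⟨isUltrafilterOn_setOf_mem huniv hinter hcompl hy', fun A hA hyA => ⟨hA, hyA⟩⟩,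
    fun p ⟨hp, hyp⟩ => hp.eq_setOf_mem hcompl hy' hyp⟩

end PrincipalUltrafilter

theorem stmt19_general {Y : Type*} [TopologicalSpace Y] [MeasurableSpace Y]
    (M : Set (Measure Y)) (hM : ∀ μ ∈ M, IsProbabilityMeasure μ)
    (B : Set (Set Y)) (hcount : B.Countable)
    (hsreg : ∀ A ∈ B, ∀ μ ∈ M, μ (closure A \ A) = 0)
    (huniv : Set.univ ∈ B)
    (hinter : ∀ A ∈ B, ∀ A' ∈ B, A ∩ A' ∈ B)
    (hcompl : ∀ A ∈ B, (closure A)ᶜ ∈ B) :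
    ∀ μ ∈ M, μ (UniquePreimageSet B) = 1 := by
  intro μ hμ
  have := hM μ hμ
  have hnull : μ (UniquePreimageSet B)ᶜ = 0 :=
    measure_mono_null (compl_uniquePreimageSet_subset huniv hinter hcompl)
      ((measure_biUnion_null_iff hcount).2 fun A hA => hsreg A hA μ hμ)
  rw [measure_congr (ae_eq_univ.2 hnull), measure_univ]

theorem stmt19 {Y : Type*} [TopologicalSpace Y] [CompactSpace Y]
    [TopologicalSpace.MetrizableSpace Y] [MeasurableSpace Y] [BorelSpace Y]
    (M : Set (Measure Y)) (hM : ∀ μ ∈ M, IsProbabilityMeasure μ)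
    (B : Set (Set Y)) (hcount : B.Countable)
    (hreg : ∀ A ∈ B, A = interior (closure A))
    (hsreg : ∀ A ∈ B, ∀ μ ∈ M, μ (closure A \ A) = 0)
    (huniv : Set.univ ∈ B) (hempty : ∅ ∈ B)
    (hinter : ∀ A ∈ B, ∀ A' ∈ B, A ∩ A' ∈ B)
    (hcompl : ∀ A ∈ B, (closure A)ᶜ ∈ B)
    (hbasis : ∀ y : Y, ∀ U : Set Y, IsOpen U → y ∈ U → ∃ A ∈ B, y ∈ A ∧ A ⊆ U) :
    ∀ μ ∈ M, μ (UniquePreimageSet B) = 1 :=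
  stmt19_general M hM B hcount hsreg huniv hinter hcompl
end
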